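/- arXiv:1703.06900 — 3 statements merged into one kernel-verified Lean document; each statement's English description precedes it below -/
import Mathlib

section
/- If a, b ∈ (0,1) satisfy log a / log b ∉ ℚ, then the set {m·log a + n·log b : m ∈ ℕ, n ∈ ℤ} is dense in (-∞, 0). -/
open Set Real

/-!
Reduce modulo `β`: on the circle `ℝ / βℤ` the `ℤ`-multiples of `α` are dense because `α / β` is
irrational, and in a compact group the `ℕ`-multiples of an element have the same closure as its
`ℤ`-multiples. The set `ℕ α + ℤ β` is the preimage in `ℝ` of those `ℕ`-multiples.
-/

def natIntCombinations (α β : ℝ) : Set ℝ :=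
  {x | ∃ (m : ℕ) (n : ℤ), x = m * α + n * β}

lemma natIntCombinations_neg_right (α β : ℝ) :
    natIntCombinations α (-β) = natIntCombinations α β := by
  ext x
  constructor <;> rintro ⟨m, n, rfl⟩ <;> exact ⟨m, -n, by push_cast; ring⟩

lemma natIntCombinations_eq_preimage_range_nsmul (α p : ℝ) :
    natIntCombinations α p = (↑) ⁻¹' range (fun m : ℕ => m • (α : AddCircle p)) := by
  ext x
  simp only [natIntCombinations, mem_ofPred_eq, mem_preimage, mem_range]
  refine exists_congr fun m => ?_
  rw [eq_comm (b := (x : AddCircle p)), ← AddCircle.coe_nsmul, ← sub_eq_zero, ← AddCircle.coe_sub,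
    AddCircle.coe_eq_zero_iff]
  refine exists_congr fun n => ?_
  rw [zsmul_eq_mul, nsmul_eq_mul]
  constructor <;> intro h <;> linarith

lemma AddCircle.denseRange_nsmul_coe_of_irrational {α p : ℝ} [Fact (0 < p)]
    (h : Irrational (α / p)) : DenseRange (fun m : ℕ => m • (α : AddCircle p)) :=
  denseRange_zsmul_iff_nsmul.mp (AddCircle.denseRange_zsmul_coe_iff.mpr h)

theorem dense_natIntCombinations_of_irrational {α β : ℝ} (h : Irrational (α / β)) :
    Dense (natIntCombinations α β) := by
  wlog hβ : 0 < β generalizing β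
  · have hβ0 : β ≠ 0 := by rintro rfl; simp at h
    rw [← natIntCombinations_neg_right]
    exact this (by simpa [div_neg] using h.neg) (by linarith [hβ0.lt_of_le (not_lt.mp hβ)])
  have : Fact (0 < β) := ⟨hβ⟩
  rw [natIntCombinations_eq_preimage_range_nsmul, QuotientAddGroup.dense_preimage_mk]
  exact AddCircle.denseRange_nsmul_coe_of_irrational h

theorem dense_log_combinations_in_neg_general
    (a b : ℝ)
    (hirr : Irrational (Real.log a / Real.log b)) :
    Set.Iio (0:ℝ) ⊆
      closure {x : ℝ | ∃ (m : ℕ) (n : ℤ), x = (m : ℝ) * Real.log a + (n : ℝ) * Real.log b} :=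
  fun x _ => dense_natIntCombinations_of_irrational hirr x

theorem dense_log_combinations_in_neg
    (a b : ℝ) (ha : a ∈ Set.Ioo (0:ℝ) 1) (hb : b ∈ Set.Ioo (0:ℝ) 1)
    (hirr : Irrational (Real.log a / Real.log b)) :
    Set.Iio (0:ℝ) ⊆
      closure {x : ℝ | ∃ (m : ℕ) (n : ℤ), x = (m : ℝ) * Real.log a + (n : ℝ) * Real.log b} :=
  dense_log_combinations_in_neg_general a b hirr
end

section
/- If a, b ∈ (0,1) satisfy log a / log b ∉ ℚ, then the closure of the set {a^m · b^n : m ∈ ℕ, n ∈ ℤ} intersected with [0,1] equals [0,1]. -/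
/-!
Since `a ^ m * b ^ n = exp (m log a + n log b)`, it suffices that `{m log a + n log b}` is dense
in `ℝ`. Modulo `log b`, this set is the forward orbit of `log a` under an irrational rotation of
the circle `ℝ ⧸ (log b)ℤ`; on a compact group the forward orbit has the same closure as the full
orbit, which is dense.
-/

open Set Real

theorem dense_natMul_add_intMul_of_irrational_div {α β : ℝ} (h : Irrational (α / β)) :
    Dense {x : ℝ | ∃ (m : ℕ) (n : ℤ), x = m * α + n * β} := by
  have hβ : β ≠ 0 := by rintro rfl; simp at h -- `α / 0 = 0` is rational
  have : Fact (0 < |β|) := ⟨abs_pos.2 hβ⟩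
  have hdense : DenseRange (fun m : ℕ ↦ m • (α : AddCircle |β|)) := by
    rw [← denseRange_zsmul_iff_nsmul, AddCircle.denseRange_zsmul_coe_iff]
    rcases abs_choice β with hb | hb <;> simp [hb, div_neg, irrational_neg_iff, h]
  rw [DenseRange, ← QuotientAddGroup.dense_preimage_mk] at hdense
  convert hdense using 1
  ext x
  simp only [mem_ofPred_eq, mem_preimage, mem_range, ← QuotientAddGroup.mk_nsmul,
    QuotientAddGroup.eq, zmultiples_abs, AddSubgroup.mem_zmultiples_iff]
  refine exists_congr fun m ↦ ⟨fun ⟨n, hn⟩ ↦ ⟨n, ?_⟩, fun ⟨n, hn⟩ ↦ ⟨n, ?_⟩⟩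
  · rw [hn, nsmul_eq_mul, zsmul_eq_mul]; ring
  · rw [nsmul_eq_mul, zsmul_eq_mul] at hn; linarith

theorem closure_natPow_mul_zpow_eq_Ici {a b : ℝ} (ha : 0 < a) (hb : 0 < b)
    (h : Irrational (log a / log b)) :
    closure {x : ℝ | ∃ (m : ℕ) (n : ℤ), x = a ^ (m : ℤ) * b ^ n} = Ici 0 := by
  set S := {x : ℝ | ∃ (m : ℕ) (n : ℤ), x = a ^ (m : ℤ) * b ^ n}
  have hS : S ⊆ Ioi 0 := by
    rintro _ ⟨m, n, rfl⟩
    exact mul_pos (zpow_pos ha _) (zpow_pos hb _)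
  have hexp : exp '' {x : ℝ | ∃ (m : ℕ) (n : ℤ), x = m * log a + n * log b} ⊆ S := by
    rintro _ ⟨_, ⟨m, n, rfl⟩, rfl⟩
    refine ⟨m, n, ?_⟩
    rw [← rpow_intCast, ← rpow_intCast, rpow_def_of_pos ha, rpow_def_of_pos hb, ← exp_add]
    push_cast
    ring_nf
  have hpos : Ioi 0 ⊆ closure S :=
    calc Ioi 0 = exp '' closure {x : ℝ | ∃ (m : ℕ) (n : ℤ), x = m * log a + n * log b} := by
          rw [(dense_natMul_add_intMul_of_irrational_div h).closure_eq, image_univ, range_exp]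
      _ ⊆ closure S := (image_closure_subset_closure_image continuous_exp).trans (closure_mono hexp)
  refine (closure_minimal (hS.trans Ioi_subset_Ici_self) isClosed_Ici).antisymm ?_
  simpa using closure_mono hpos

theorem closure_pow_products_inter_unit_interval
    (a b : ℝ) (ha : a ∈ Set.Ioo (0:ℝ) 1) (hb : b ∈ Set.Ioo (0:ℝ) 1)
    (hirr : Irrational (Real.log a / Real.log b)) :
    closure {x : ℝ | ∃ (m : ℕ) (n : ℤ), x = a ^ (m : ℤ) * b ^ n} ∩ Set.Icc (0:ℝ) 1
      = Set.Icc (0:ℝ) 1 := by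
  rw [closure_natPow_mul_zpow_eq_Ici ha.1 hb.1 hirr]
  exact inter_eq_right.2 Icc_subset_Ici_self
end

section
/- For the set F = {0} ∪ ⋃_{k≥1} ⋃_{l=0}^{k} {2^{-k} + l·4^{-k}}, with T_k(x) = k^{-1}·4^k·(x − 2^{-k}), the sets T_k(F) ∩ [0,1] converge in the Hausdorff metric to [0,1]. -/
open Set Metric MeasureTheory Filter Topology

noncomputable section

def CoveredWith {X : Type*} [MetricSpace X] (E : Set X) (r : ℝ) (n : ℕ) : Prop :=
  ∃ 𝒰 : Finset (Set X), 𝒰.card ≤ n ∧ (∀ U ∈ 𝒰, Metric.diam U ≤ r) ∧ E ⊆ ⋃₀ ↑𝒰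

noncomputable def assouadDim {X : Type*} [MetricSpace X] (F : Set X) : ℝ :=
  sInf {s : ℝ | 0 ≤ s ∧ ∃ C > 0, ∀ x ∈ F, ∀ R > 0, ∀ r, 0 < r → r < R →
    ∃ n : ℕ, (n : ℝ) ≤ C * (R / r) ^ s ∧ CoveredWith (Metric.ball x R ∩ F) r n}

def distSet {X : Type*} [MetricSpace X] (A : Set X) : Set ℝ :=
  {r | ∃ x ∈ A, ∃ y ∈ A, dist x y = r}

def IsSimilarity {X : Type*} [MetricSpace X] (T : X → X) (c : ℝ) : Prop :=
  0 < c ∧ ∀ x y, dist (T x) (T y) = c * dist x y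

def IsWeakTangent {d : ℕ} (E F : Set (EuclideanSpace ℝ (Fin d))) : Prop :=
  IsCompact E ∧ E.Nonempty ∧ ∃ X : Set (EuclideanSpace ℝ (Fin d)), IsCompact X ∧ E ⊆ X ∧
    ∃ (T : ℕ → EuclideanSpace ℝ (Fin d) → EuclideanSpace ℝ (Fin d)) (c : ℕ → ℝ),
      (∀ k, IsSimilarity (T k) (c k)) ∧ (∀ k, (T k '' F ∩ X).Nonempty) ∧
      Tendsto (fun k => hausdorffDist (T k '' F ∩ X) E) atTop (𝓝 0)

/-- The set `{0} ∪ ⋃_{k≥1} ⋃_{l=0}^{k} {2^{-k} + l 4^{-k}}`. -/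
def exampleSet : Set ℝ :=
  insert 0 {x : ℝ | ∃ k : ℕ, 1 ≤ k ∧ ∃ l : ℕ, l ≤ k ∧
    x = ((2:ℝ) ^ k)⁻¹ + (l : ℝ) * ((4:ℝ) ^ k)⁻¹}

theorem exampleSet_blowups_tendsto_unitInterval :
    Tendsto (fun k : ℕ => hausdorffDist
        ((fun x : ℝ => (k : ℝ)⁻¹ * (4:ℝ) ^ k * (x - ((2:ℝ) ^ k)⁻¹)) '' exampleSet
          ∩ Set.Icc (0:ℝ) 1)
        (Set.Icc (0:ℝ) 1)) atTop (𝓝 0) := by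
  set A : ℕ → Set ℝ := fun k =>
    (fun x : ℝ => (k : ℝ)⁻¹ * (4:ℝ) ^ k * (x - ((2:ℝ) ^ k)⁻¹)) '' exampleSet ∩ Set.Icc (0:ℝ) 1
    with hA
  have hmem : ∀ k : ℕ, 1 ≤ k → ∀ l : ℕ, l ≤ k → ((l : ℝ) / k) ∈ A k := by
    intro k hk l hl
    have hk0 : (0:ℝ) < (k:ℝ) := by exact_mod_cast hk
    constructor
    · refine ⟨((2:ℝ) ^ k)⁻¹ + (l : ℝ) * ((4:ℝ) ^ k)⁻¹, Or.inr ⟨k, hk, l, hl, rfl⟩, ?_⟩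
      have h4 : ((4:ℝ) ^ k) ≠ 0 := by positivity
      field_simp
      ring
    · constructor
      · positivity
      · rw [div_le_one hk0]; exact_mod_cast hl
  have hbound : ∀ k : ℕ, 1 ≤ k → hausdorffDist (A k) (Set.Icc (0:ℝ) 1) ≤ 1 / k := by
    intro k hk
    have hk0 : (0:ℝ) < (k:ℝ) := by exact_mod_cast hk
    apply Metric.hausdorffDist_le_of_infDist (by positivity)
    · intro x hx
      have : x ∈ Set.Icc (0:ℝ) 1 := hx.2
      calc infDist x (Set.Icc (0:ℝ) 1) ≤ dist x x := infDist_le_dist_of_mem this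
        _ = 0 := dist_self x
        _ ≤ 1 / k := by positivity
    · intro y hy
      set l : ℕ := ⌊(k:ℝ) * y⌋.toNat with hl
      have hky0 : (0:ℝ) ≤ (k:ℝ) * y := mul_nonneg hk0.le hy.1
      have hlval : (l : ℝ) = ⌊(k:ℝ) * y⌋ := by
        rw [hl]; exact_mod_cast Int.toNat_of_nonneg (Int.floor_nonneg.mpr hky0)
      have hlk : l ≤ k := by
        have : ((l:ℝ)) ≤ (k:ℝ) := by
          rw [hlval]
          calc (⌊(k:ℝ) * y⌋ : ℝ) ≤ (k:ℝ) * y := Int.floor_le _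
            _ ≤ (k:ℝ) * 1 := by nlinarith [hy.2]
            _ = k := mul_one _
        exact_mod_cast this
      have hle : (l : ℝ) ≤ (k:ℝ) * y := by rw [hlval]; exact Int.floor_le _
      have hgt : (k:ℝ) * y < l + 1 := by rw [hlval]; exact Int.lt_floor_add_one _
      have hdist : dist y ((l : ℝ) / k) ≤ 1 / k := by
        rw [Real.dist_eq, abs_le]
        constructor
        · have h1 : (0:ℝ) ≤ y - (l:ℝ)/k := by
            rw [sub_nonneg, div_le_iff₀ hk0]; nlinarith
          have h2 : (0:ℝ) < 1/k := by positivity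
          linarith
        · rw [sub_le_iff_le_add, ← add_div, le_div_iff₀ hk0]
          nlinarith
      calc infDist y (A k) ≤ dist y ((l:ℝ)/k) := infDist_le_dist_of_mem (hmem k hk l hlk)
        _ ≤ 1 / k := hdist
  apply squeeze_zero' (Filter.Eventually.of_forall fun k => hausdorffDist_nonneg)
    (Filter.eventually_atTop.mpr ⟨1, hbound⟩) tendsto_one_div_atTop_nhds_zero_nat
end
end
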